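/- arXiv:math/0702248 — 6 statements merged into one kernel-verified Lean document; each statement's English description precedes it below -/
import Mathlib

section
/- Let G be a nonzero subrectangular nonnegative s×s matrix with G_{11} > 0. Then there is a sequence of positive scalars s_n such that G^n / s_n converges to a rank-one nonnegative matrix. -/
/-!
Fix the pivot `p = 0`. Subrectangularity makes column `p` of `G` dominate every column and row
`p` dominate every row, up to a constant; hence in `G ^ (n + 2) = G ^ (n + 1) * G` the term through
`p` carries a fixed fraction `δ > 0` of each entry of row `p` (a Doeblin condition). The ratios
`r n k = (G ^ (n + 1)) i k / (G ^ (n + 1)) p k` over the support columns `k` are therefore, at step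
`n + 1`, weighted averages of those at step `n` in which `r n p` has weight at least `δ`, so their
oscillation contracts by `1 - δ` and they converge to a common limit `u i`. This is the elementary
substitute for Perron's theorem. Transposing gives the limits `v j` of
`(G ^ (n + 1)) p j / (G ^ (n + 1)) p p`, so `G ^ n / (G ^ n) p p → u vᵀ`, of rank one as
`u p = v p = 1`.
-/

open Filter Topology

theorem Finset.sum_mul_le_of_mul_sum_le {ι : Type*} {s : Finset ι} {p : ι} (hp : p ∈ s)
    {w x : ι → ℝ} (hw : ∀ k ∈ s, 0 ≤ w k) {δ hi : ℝ} (hδ : δ * ∑ k ∈ s, w k ≤ w p)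
    (hx : ∀ k ∈ s, x k ≤ hi) :
    ∑ k ∈ s, x k * w k ≤ (δ * x p + (1 - δ) * hi) * ∑ k ∈ s, w k := by
  have hsingle : (hi - x p) * w p ≤ ∑ k ∈ s, (hi - x k) * w k :=
    Finset.single_le_sum (fun k hk => mul_nonneg (sub_nonneg.2 (hx k hk)) (hw k hk)) hp
  have hweight : (hi - x p) * (δ * ∑ k ∈ s, w k) ≤ (hi - x p) * w p :=
    mul_le_mul_of_nonneg_left hδ (sub_nonneg.2 (hx p hp))
  simp only [sub_mul, Finset.sum_sub_distrib, ← Finset.mul_sum] at hsingle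
  nlinarith

theorem Finset.le_sum_mul_of_mul_sum_le {ι : Type*} {s : Finset ι} {p : ι} (hp : p ∈ s)
    {w x : ι → ℝ} (hw : ∀ k ∈ s, 0 ≤ w k) {δ lo : ℝ} (hδ : δ * ∑ k ∈ s, w k ≤ w p)
    (hx : ∀ k ∈ s, lo ≤ x k) :
    (δ * x p + (1 - δ) * lo) * ∑ k ∈ s, w k ≤ ∑ k ∈ s, x k * w k := by
  have := Finset.sum_mul_le_of_mul_sum_le hp hw hδ (x := -x) (hi := -lo)
    fun k hk => neg_le_neg (hx k hk)
  simp only [Pi.neg_apply, neg_mul, Finset.sum_neg_distrib] at this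
  linarith

theorem exists_tendsto_of_antitone_of_monotone {M m : ℕ → ℝ} (hM : Antitone M)
    (hm : Monotone m) (hle : ∀ n, m n ≤ M n) (hgap : Tendsto (M - m) atTop (𝓝 0)) :
    ∃ u, Tendsto M atTop (𝓝 u) ∧ Tendsto m atTop (𝓝 u) := by
  have hMu : Tendsto M atTop (𝓝 (⨅ n, M n)) :=
    tendsto_atTop_ciInf hM ⟨m 0, by rintro _ ⟨n, rfl⟩; exact (hm n.zero_le).trans (hle n)⟩
  refine ⟨_, hMu, ?_⟩
  simpa using hMu.sub hgap

theorem exists_tendsto_of_contraction {ι : Type*} {s : Finset ι} {p : ι} (hp : p ∈ s)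
    {δ : ℝ} (hδ0 : 0 < δ) (hδ1 : δ ≤ 1) {r : ℕ → ι → ℝ}
    (hle : ∀ n hi, (∀ k ∈ s, r n k ≤ hi) → ∀ j ∈ s, r (n + 1) j ≤ δ * r n p + (1 - δ) * hi)
    (hge : ∀ n lo, (∀ k ∈ s, lo ≤ r n k) → ∀ j ∈ s, δ * r n p + (1 - δ) * lo ≤ r (n + 1) j) :
    ∃ u, ∀ j ∈ s, Tendsto (fun n => r n j) atTop (𝓝 u) := by
  set M : ℕ → ℝ := fun n => s.sup' ⟨p, hp⟩ (r n)
  set m : ℕ → ℝ := fun n => s.inf' ⟨p, hp⟩ (r n)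
  have hrM : ∀ n, ∀ k ∈ s, r n k ≤ M n := fun n k hk => s.le_sup' (r n) hk
  have hmr : ∀ n, ∀ k ∈ s, m n ≤ r n k := fun n k hk => s.inf'_le (r n) hk
  have hMstep : ∀ n, M (n + 1) ≤ δ * r n p + (1 - δ) * M n := fun n =>
    s.sup'_le _ _ (hle n _ (hrM n))
  have hmstep : ∀ n, δ * r n p + (1 - δ) * m n ≤ m (n + 1) := fun n =>
    s.le_inf' _ _ (hge n _ (hmr n))
  have hM : Antitone M := antitone_nat_of_succ_le fun n => by
    nlinarith [hMstep n, hrM n p hp]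
  have hm : Monotone m := monotone_nat_of_le_succ fun n => by
    nlinarith [hmstep n, hmr n p hp]
  have hgap : ∀ n, M n - m n ≤ (1 - δ) ^ n * (M 0 - m 0) := by
    intro n
    induction n with
    | zero => simp
    | succ n ih =>
      calc M (n + 1) - m (n + 1) ≤ (1 - δ) * (M n - m n) := by linarith [hMstep n, hmstep n]
        _ ≤ (1 - δ) * ((1 - δ) ^ n * (M 0 - m 0)) := by gcongr
        _ = (1 - δ) ^ (n + 1) * (M 0 - m 0) := by ring
  have hgap0 : Tendsto (M - m) atTop (𝓝 0) := by
    refine squeeze_zero (fun n => sub_nonneg.2 ((hmr n p hp).trans (hrM n p hp))) hgap ?_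
    simpa using (tendsto_pow_atTop_nhds_zero_of_lt_one (sub_nonneg.2 hδ1)
      (sub_lt_self 1 hδ0)).mul_const (M 0 - m 0)
  obtain ⟨u, hMu, hmu⟩ := exists_tendsto_of_antitone_of_monotone hM hm
    (fun n => (hmr n p hp).trans (hrM n p hp)) hgap0
  exact ⟨u, fun j hj => tendsto_of_tendsto_of_tendsto_of_le_of_le hmu hMu
    (fun n => hmr n j hj) (fun n => hrM n j hj)⟩

theorem exists_le_mul_apply_of_apply_eq_zero {ι κ : Type*} [Finite ι] [Finite κ]
    {f : ι → κ → ℝ} {p : κ} (hf : ∀ t, 0 ≤ f t p) (hzero : ∀ t, f t p = 0 → ∀ k, f t k = 0) :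
    ∃ c, 1 ≤ c ∧ ∀ t k, f t k ≤ c * f t p := by
  obtain ⟨B, hB⟩ := Finite.exists_le fun tk : ι × κ => f tk.1 tk.2 / f tk.1 p
  refine ⟨max B 1, le_max_right _ _, fun t k => ?_⟩
  rcases (hf t).eq_or_lt with h | h
  · rw [hzero t h.symm k, ← h, mul_zero]
  · calc f t k = f t k / f t p * f t p := (div_mul_cancel₀ _ h.ne').symm
      _ ≤ max B 1 * f t p := by gcongr; exact (hB (t, k)).trans (le_max_left _ _)

namespace Matrix

variable {ι : Type*} [Fintype ι]

theorem apply_mul_apply_le_mul_apply {A B : Matrix ι ι ℝ} (hA : ∀ i j, 0 ≤ A i j)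
    (hB : ∀ i j, 0 ≤ B i j) (i k j : ι) : A i k * B k j ≤ (A * B) i j :=
  Finset.single_le_sum (f := fun k => A i k * B k j) (fun k _ => mul_nonneg (hA i k) (hB k j))
    (Finset.mem_univ k)

theorem mul_apply_le_mul_mul_apply {A G : Matrix ι ι ℝ} (hA : ∀ i j, 0 ≤ A i j) {c : ℝ} {p : ι}
    (hG : ∀ t k, G t k ≤ c * G t p) (i k : ι) : (A * G) i k ≤ c * (A * G) i p := by
  simp only [mul_apply, Finset.mul_sum]
  refine Finset.sum_le_sum fun t _ => ?_
  calc A i t * G t k ≤ A i t * (c * G t p) := mul_le_mul_of_nonneg_left (hG t k) (hA i t)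
    _ = c * (A i t * G t p) := by ring

variable [DecidableEq ι] {G : Matrix ι ι ℝ} {p : ι}

theorem pow_apply_pivot_pos (hG : ∀ i j, 0 ≤ G i j) (hpp : 0 < G p p) (n : ℕ) :
    0 < (G ^ n) p p := by
  induction n with
  | zero => simp
  | succ n ih =>
    rw [pow_succ]
    exact (mul_pos ih hpp).trans_le
      (apply_mul_apply_le_mul_apply (pow_apply_nonneg hG n) hG p p p)

theorem pow_succ_apply_pos (hG : ∀ i j, 0 ≤ G i j) (hpp : 0 < G p p) {j : ι} (hpj : 0 < G p j)
    (n : ℕ) : 0 < (G ^ (n + 1)) p j := by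
  rw [pow_succ]
  exact (mul_pos (pow_apply_pivot_pos hG hpp n) hpj).trans_le
    (apply_mul_apply_le_mul_apply (pow_apply_nonneg hG n) hG p p j)

theorem pow_succ_apply_eq_zero (hrow : ∀ j, G p j = 0 → ∀ k, G k j = 0) {j : ι} (hpj : G p j = 0)
    (n : ℕ) (i : ι) : (G ^ (n + 1)) i j = 0 := by
  rw [pow_succ, mul_apply]
  exact Finset.sum_eq_zero fun k _ => by rw [hrow j hpj k, mul_zero]

theorem pow_add_two_apply_eq_sum (hG : ∀ i j, 0 ≤ G i j)
    (hrow : ∀ j, G p j = 0 → ∀ k, G k j = 0) (n : ℕ) (i j : ι) :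
    (G ^ (n + 2)) i j = ∑ k ∈ Finset.univ.filter (0 < G p ·), (G ^ (n + 1)) i k * G k j := by
  rw [pow_succ, mul_apply, ← Finset.sum_filter_add_sum_filter_not _ (0 < G p ·)]
  refine add_eq_left.2 (Finset.sum_eq_zero fun k hk => ?_)
  have hpk : G p k = 0 := ((hG p k).eq_or_lt.resolve_right (Finset.mem_filter.1 hk).2).symm
  rw [pow_succ_apply_eq_zero hrow hpk, zero_mul]

theorem exists_mul_pow_add_two_apply_le (hG : ∀ i j, 0 ≤ G i j)
    (hcol : ∀ t, G t p = 0 → ∀ k, G t k = 0) (hrow : ∀ j, G p j = 0 → ∀ k, G k j = 0) :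
    ∃ δ, 0 < δ ∧ δ ≤ 1 ∧ ∀ n j, δ * (G ^ (n + 2)) p j ≤ (G ^ (n + 1)) p p * G p j := by
  obtain ⟨c, hc1, hc⟩ := exists_le_mul_apply_of_apply_eq_zero (f := G) (fun t => hG t p) hcol
  obtain ⟨c', hc1', hc'⟩ := exists_le_mul_apply_of_apply_eq_zero (f := Gᵀ) (fun t => hG p t) hrow
  have hcard : (1 : ℝ) ≤ Fintype.card ι := by exact_mod_cast Fintype.card_pos_iff.2 ⟨p⟩
  have hK : 1 ≤ Fintype.card ι * c * c' := one_le_mul_of_one_le_of_one_le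
    (one_le_mul_of_one_le_of_one_le hcard hc1) hc1'
  refine ⟨(Fintype.card ι * c * c')⁻¹, by positivity, inv_le_one_of_one_le₀ hK, fun n j => ?_⟩
  rw [inv_mul_le_iff₀ (by positivity)]
  have hrowp : ∀ k, (G ^ (n + 1)) p k ≤ c * (G ^ (n + 1)) p p := by
    rw [pow_succ]; exact mul_apply_le_mul_mul_apply (pow_apply_nonneg hG n) hc p
  calc (G ^ (n + 2)) p j = ∑ k, (G ^ (n + 1)) p k * G k j := by rw [pow_succ, mul_apply]
    _ ≤ ∑ _k : ι, c * (G ^ (n + 1)) p p * (c' * G p j) := by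
      refine Finset.sum_le_sum fun k _ => mul_le_mul (hrowp k) (hc' j k) (hG k j) ?_
      exact mul_nonneg (by positivity) (pow_apply_nonneg hG _ p p)
    _ = Fintype.card ι * c * c' * ((G ^ (n + 1)) p p * G p j) := by
      rw [Finset.sum_const, Finset.card_univ, nsmul_eq_mul]; ring

theorem exists_tendsto_pow_succ_apply_div (hG : ∀ i j, 0 ≤ G i j) (hpp : 0 < G p p)
    (hcol : ∀ t, G t p = 0 → ∀ k, G t k = 0) (hrow : ∀ j, G p j = 0 → ∀ k, G k j = 0) (i : ι) :
    ∃ u, 0 ≤ u ∧ ∀ j, 0 < G p j →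
      Tendsto (fun n => (G ^ (n + 1)) i j / (G ^ (n + 1)) p j) atTop (𝓝 u) := by
  set s := Finset.univ.filter (0 < G p ·)
  have hmem : ∀ {k}, k ∈ s ↔ 0 < G p k := by simp [s]
  set r : ℕ → ι → ℝ := fun n k => (G ^ (n + 1)) i k / (G ^ (n + 1)) p k
  set w : ℕ → ι → ι → ℝ := fun n j k => (G ^ (n + 1)) p k * G k j
  have hw : ∀ n j k, 0 ≤ w n j k := fun n j k => mul_nonneg (pow_apply_nonneg hG _ p k) (hG k j)
  obtain ⟨δ, hδ0, hδ1, hδ⟩ := exists_mul_pow_add_two_apply_le hG hcol hrow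
  have hwp : ∀ n j, δ * ∑ k ∈ s, w n j k ≤ w n j p := fun n j =>
    (pow_add_two_apply_eq_sum hG hrow n p j).symm ▸ hδ n j
  have hW : ∀ n, ∀ j ∈ s, 0 < ∑ k ∈ s, w n j k := fun n j hj =>
    pow_add_two_apply_eq_sum hG hrow n p j ▸ pow_succ_apply_pos hG hpp (hmem.1 hj) (n + 1)
  -- `r (n + 1) j` is a `w n j`-average of the `r n k`, in which column `p` has weight `≥ δ`.
  have hr : ∀ n, ∀ j ∈ s, r (n + 1) j = (∑ k ∈ s, r n k * w n j k) / ∑ k ∈ s, w n j k := by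
    intro n j hj
    show (G ^ (n + 2)) i j / (G ^ (n + 2)) p j = _
    rw [pow_add_two_apply_eq_sum hG hrow n i j, pow_add_two_apply_eq_sum hG hrow n p j]
    congr 1
    refine Finset.sum_congr rfl fun k hk => ?_
    rw [← mul_assoc, div_mul_cancel₀ _ (pow_succ_apply_pos hG hpp (hmem.1 hk) n).ne']
  obtain ⟨u, hu⟩ := exists_tendsto_of_contraction (hmem.2 hpp) hδ0 hδ1 (r := r)
    (fun n hi hhi j hj => by
      rw [hr n j hj, div_le_iff₀ (hW n j hj)]
      exact Finset.sum_mul_le_of_mul_sum_le (hmem.2 hpp) (fun k _ => hw n j k) (hwp n j) hhi)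
    (fun n lo hlo j hj => by
      rw [hr n j hj, le_div_iff₀ (hW n j hj)]
      exact Finset.le_sum_mul_of_mul_sum_le (hmem.2 hpp) (fun k _ => hw n j k) (hwp n j) hlo)
  refine ⟨u, ge_of_tendsto' (hu p (hmem.2 hpp)) fun n => ?_, fun j hj => hu j (hmem.2 hj)⟩
  exact div_nonneg (pow_apply_nonneg hG _ i p) (pow_apply_nonneg hG _ p p)

theorem exists_tendsto_pow_apply_div_pivot (hG : ∀ i j, 0 ≤ G i j) (hpp : 0 < G p p)
    (hcol : ∀ t, G t p = 0 → ∀ k, G t k = 0) (hrow : ∀ j, G p j = 0 → ∀ k, G k j = 0) :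
    ∃ u v : ι → ℝ, u p = 1 ∧ v p = 1 ∧ (∀ i, 0 ≤ u i) ∧ (∀ j, 0 ≤ v j) ∧
      ∀ i j, Tendsto (fun n => (G ^ n) i j / (G ^ n) p p) atTop (𝓝 (u i * v j)) := by
  choose u hu0 hu using exists_tendsto_pow_succ_apply_div hG hpp hcol hrow
  choose v hv0 hv using
    exists_tendsto_pow_succ_apply_div (G := Gᵀ) (fun i j => hG j i) hpp hrow hcol
  have hv : ∀ j, Tendsto (fun n => (G ^ (n + 1)) p j / (G ^ (n + 1)) p p) atTop (𝓝 (v j)) :=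
    fun j => by simpa only [← transpose_pow, transpose_apply] using hv j p hpp
  have hpivot : ∀ n, (G ^ (n + 1)) p p / (G ^ (n + 1)) p p = 1 := fun n =>
    div_self (pow_apply_pivot_pos hG hpp _).ne'
  have hup : u p = 1 :=
    tendsto_nhds_unique (hu p p hpp) (by simp only [hpivot, tendsto_const_nhds])
  have hvp : v p = 1 := tendsto_nhds_unique (hv p) (by simp only [hpivot, tendsto_const_nhds])
  refine ⟨u, v, hup, hvp, hu0, hv0, fun i j => (tendsto_add_atTop_iff_nat 1).1 ?_⟩
  rcases (hG p j).eq_or_lt with hpj | hpj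
  · have hzero := pow_succ_apply_eq_zero hrow hpj.symm
    have hvj : v j = 0 :=
      tendsto_nhds_unique (hv j) (by simp only [hzero, zero_div, tendsto_const_nhds])
    simp only [hzero, zero_div, hvj, mul_zero, tendsto_const_nhds]
  · refine ((hu i j hpj).mul (hv j)).congr fun n => ?_
    rw [div_mul_div_cancel₀ (pow_succ_apply_pos hG hpp hpj n).ne']


theorem rank_vecMulVec_eq_one {ι K : Type*} [Fintype ι] [DecidableEq ι] [Field K]
    {u v : ι → K} (hu : u ≠ 0) (hv : v ≠ 0) : (vecMulVec u v).rank = 1 := by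
  refine le_antisymm (rank_vecMulVec_le u v) (Nat.one_le_iff_ne_zero.2 fun h => ?_)
  rw [rank, Submodule.finrank_eq_zero, LinearMap.range_eq_bot] at h
  obtain ⟨i, hi⟩ := Function.ne_iff.1 hu
  obtain ⟨j, hj⟩ := Function.ne_iff.1 hv
  have := congrFun (LinearMap.congr_fun h (Pi.single j 1)) i
  rw [mulVecLin_apply, mulVec_single_one] at this
  simp_all [vecMulVec_apply]

theorem apply_eq_zero_of_support_eq_prod {ι κ : Type*} {G : Matrix ι κ ℝ}
    (hG : ∀ i j, 0 ≤ G i j) {R : Set ι} {C : Set κ} (hsupp : ∀ i j, 0 < G i j ↔ i ∈ R ∧ j ∈ C)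
    {p : κ} (hp : p ∈ C) (t : ι) (htp : G t p = 0) (k : κ) : G t k = 0 := by
  by_contra htk
  have ht := ((hsupp t k).1 ((hG t k).lt_of_ne' htk)).1
  exact ((hsupp t p).2 ⟨ht, hp⟩).ne' htp

end Matrix

/-- A nonzero subrectangular nonnegative matrix `G` with `G 0 0 > 0` has rescaled powers
`G^n / s_n` converging to a rank-one nonnegative matrix. -/
theorem stmt2 (m : ℕ) (G : Matrix (Fin (m + 1)) (Fin (m + 1)) ℝ)
    (hG : ∀ i j, 0 ≤ G i j)
    (R C : Set (Fin (m + 1))) (hsupp : ∀ i j, 0 < G i j ↔ i ∈ R ∧ j ∈ C)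
    (h11 : 0 < G 0 0) :
    ∃ (c : ℕ → ℝ) (L : Matrix (Fin (m + 1)) (Fin (m + 1)) ℝ),
      (∀ n, 0 < c n) ∧ (∀ i j, 0 ≤ L i j) ∧ L.rank = 1 ∧
      Tendsto (fun n => (c n)⁻¹ • G ^ n) atTop (nhds L) := by
  obtain ⟨hR0, hC0⟩ := (hsupp 0 0).1 h11
  have hcol := Matrix.apply_eq_zero_of_support_eq_prod hG hsupp hC0
  have hrow := Matrix.apply_eq_zero_of_support_eq_prod (G := G.transpose) (fun i j => hG j i)
    (fun i j => (hsupp j i).trans and_comm) hR0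
  obtain ⟨u, v, hup, hvp, hu, hv, hlim⟩ :=
    Matrix.exists_tendsto_pow_apply_div_pivot hG h11 hcol hrow
  refine ⟨fun n => (G ^ n) 0 0, Matrix.vecMulVec u v, Matrix.pow_apply_pivot_pos hG h11,
    fun i j => mul_nonneg (hu i) (hv j),
    Matrix.rank_vecMulVec_eq_one (fun h => by simpa [hup] using congrFun h 0)
      (fun h => by simpa [hvp] using congrFun h 0),
    tendsto_pi_nhds.2 fun i => tendsto_pi_nhds.2 fun j => ?_⟩
  simpa only [Matrix.smul_apply, smul_eq_mul, inv_mul_eq_div, Matrix.vecMulVec_apply]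
    using hlim i j
end

section
/- Every α-chain is an e-chain: for any finite family of nonnegative s×s matrices M(y) summing to a stochastic matrix, and T the associated Markov operator on C(Δ), for each continuous f : Δ → ℝ the family of functions {T^n f : n ≥ 1} is equicontinuous on Δ. -/
/-!
Let `homogenize f v = (∑ v) · f (v / ∑ v)` be the degree-one homogeneous extension of `f` from
the simplex to the nonnegative cone. Expanding the iterates along words `w = y₁ ⋯ yₙ` gives
`Tⁿ f α = ∑_w homogenize f (α M(w))`, where `M(w) = M(y₁) ⋯ M(yₙ)`. By homogeneity each term is
`mass M(w) · homogenize f (α V_w)` with `V_w = M(w) / mass M(w)` in the compact set `W` of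
nonnegative matrices of total mass one, and the masses sum to `s` because `∑_w M(w) = Pⁿ` is
stochastic. So `|Tⁿ f α - Tⁿ f β| ≤ s · sup_{V ∈ W} |homogenize f (α V) - homogenize f (β V)|`,
and the right side is small for `α` near `β`, uniformly in `n`, since `(α, V) ↦ homogenize f (α V)`
is uniformly continuous on the compact set `Δ × W`.
-/

open Matrix

/-- The Markov operator of the α-chain. -/
noncomputable def alphaOp {s : ℕ} {Y : Type*} [Fintype Y]
    (M : Y → Matrix (Fin s) (Fin s) ℝ)
    (f : (Fin s → ℝ) → ℝ) (α : Fin s → ℝ) : ℝ :=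
  ∑ y, (∑ j, (α ᵥ* M y) j) * f ((∑ j, (α ᵥ* M y) j)⁻¹ • (α ᵥ* M y))

theorem Metric.uniformEquicontinuousOn_iff {ι β α : Type*} [PseudoMetricSpace α]
    [PseudoMetricSpace β] {F : ι → β → α} {S : Set β} :
    UniformEquicontinuousOn F S ↔ ∀ ε > 0, ∃ δ > 0, ∀ x ∈ S, ∀ y ∈ S, dist x y < δ →
      ∀ i, dist (F i x) (F i y) < ε := by
  rw [(Metric.uniformity_basis_dist.inf_principal (S ×ˢ S)).uniformEquicontinuousOn_iff
    Metric.uniformity_basis_dist]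
  simp only [Set.mem_inter_iff, Set.mem_ofPred_eq, Set.mem_prod]
  grind

theorem Fintype.sum_fin_succ_pi {Y M : Type*} [Fintype Y] [AddCommMonoid M] {n : ℕ}
    (F : (Fin (n + 1) → Y) → M) :
    ∑ w, F w = ∑ y, ∑ w : Fin n → Y, F (Fin.cons y w) := by
  rw [← (Fin.consEquiv fun _ => Y).sum_comp, Fintype.sum_prod_type]
  rfl

section Homogenize

variable {ι : Type*} [Fintype ι] (f : (ι → ℝ) → ℝ)

noncomputable def homogenize (v : ι → ℝ) : ℝ :=
  (∑ i, v i) * f ((∑ i, v i)⁻¹ • v)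

theorem homogenize_smul (c : ℝ) (v : ι → ℝ) : homogenize f (c • v) = c * homogenize f v := by
  unfold homogenize
  simp only [Pi.smul_apply, smul_eq_mul, ← Finset.mul_sum]
  rcases eq_or_ne c 0 with rfl | hc
  · simp
  rcases eq_or_ne (∑ i, v i) 0 with h | h
  · simp [h]
  have hcoef : (c * ∑ i, v i)⁻¹ * c = (∑ i, v i)⁻¹ := by field_simp
  rw [smul_smul, hcoef]
  ring

@[simp] theorem homogenize_zero : homogenize f 0 = 0 := by simp [homogenize]

theorem homogenize_of_mem_stdSimplex {v : ι → ℝ} (hv : v ∈ stdSimplex ℝ ι) :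
    homogenize f v = f v := by
  simp [homogenize, hv.2]

theorem inv_sum_smul_mem_stdSimplex {v : ι → ℝ} (hv : 0 ≤ v) (h : 0 < ∑ i, v i) :
    (∑ i, v i)⁻¹ • v ∈ stdSimplex ℝ ι :=
  ⟨fun i => smul_nonneg (inv_nonneg.2 h.le) (hv i), by
    simp only [Pi.smul_apply, smul_eq_mul, ← Finset.mul_sum, inv_mul_cancel₀ h.ne']⟩

theorem abs_homogenize_le {C : ℝ} (hC : ∀ x ∈ stdSimplex ℝ ι, |f x| ≤ C) {v : ι → ℝ}
    (hv : 0 ≤ v) : |homogenize f v| ≤ C * ∑ i, v i := by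
  rcases (Fintype.sum_nonneg hv).eq_or_lt with h | h
  · simp [homogenize, ← h]
  rw [homogenize, abs_mul, abs_of_pos h, mul_comm]
  exact mul_le_mul_of_nonneg_right (hC _ (inv_sum_smul_mem_stdSimplex hv h)) h.le

theorem continuousOn_homogenize (hf : ContinuousOn f (stdSimplex ℝ ι)) :
    ContinuousOn (homogenize f) (Set.Ici 0) := by
  have hmass : Continuous fun v : ι → ℝ => ∑ i, v i := by fun_prop
  intro v₀ hv₀
  rcases (Fintype.sum_nonneg hv₀).eq_or_lt with h | h
  · obtain ⟨C, hC⟩ := (isCompact_stdSimplex ℝ ι).exists_bound_of_continuousOn hf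
    have hzero : homogenize f v₀ = 0 := by simp [homogenize, ← h]
    rw [ContinuousWithinAt, hzero]
    refine squeeze_zero_norm' (eventually_nhdsWithin_of_forall fun v hv =>
      abs_homogenize_le f (fun x hx => hC x hx) hv) ?_
    simpa [← h] using ((hmass.tendsto v₀).const_mul C).mono_left nhdsWithin_le_nhds
  · have hon : ContinuousOn (homogenize f) (Set.Ici 0 ∩ {v | 0 < ∑ i, v i}) :=
      hmass.continuousOn.mul <| hf.comp
        ((hmass.continuousOn.inv₀ fun v hv => hv.2.ne').smul continuousOn_id)
        fun v hv => inv_sum_smul_mem_stdSimplex hv.1 hv.2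
    exact (hon v₀ ⟨hv₀, h⟩).mono_of_mem_nhdsWithin
      (inter_mem_nhdsWithin _ ((isOpen_lt continuous_const hmass).mem_nhds h))

end Homogenize

section WordProd

variable {R Y : Type*}

def wordProd [Monoid R] (M : Y → R) {n : ℕ} (w : Fin n → Y) : R :=
  (List.ofFn fun i => M (w i)).prod

@[simp] theorem wordProd_zero [Monoid R] (M : Y → R) (w : Fin 0 → Y) : wordProd M w = 1 := by
  simp [wordProd]

@[simp] theorem wordProd_cons [Monoid R] (M : Y → R) {n : ℕ} (y : Y) (w : Fin n → Y) :
    wordProd M (Fin.cons y w) = M y * wordProd M w := by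
  simp [wordProd, List.ofFn_succ]

theorem sum_wordProd [Semiring R] [Fintype Y] (M : Y → R) (n : ℕ) :
    ∑ w : Fin n → Y, wordProd M w = (∑ y, M y) ^ n := by
  induction n with
  | zero => simp
  | succ n ih => simp [Fintype.sum_fin_succ_pi, ← Finset.mul_sum, ih, pow_succ', Finset.sum_mul]

end WordProd

section Nonneg

variable {ι κ : Type*} [Fintype ι]

theorem Matrix.vecMul_nonneg {β : ι → ℝ} (hβ : 0 ≤ β) {A : Matrix ι κ ℝ} (hA : ∀ i j, 0 ≤ A i j) :
    0 ≤ β ᵥ* A :=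
  fun j => Finset.sum_nonneg fun i _ => mul_nonneg (hβ i) (hA i j)

theorem wordProd_nonneg [DecidableEq ι] {Y : Type*} {M : Y → Matrix ι ι ℝ}
    (hM : ∀ y i j, 0 ≤ M y i j) {n : ℕ} (w : Fin n → Y) (i j : ι) : 0 ≤ wordProd M w i j := by
  induction n generalizing i j with
  | zero => simpa using zero_le_one_elem i j
  | succ n ih =>
    rw [← Fin.cons_self_tail w, wordProd_cons, Matrix.mul_apply]
    exact Finset.sum_nonneg fun k _ => mul_nonneg (hM _ i k) (ih _ k j)

end Nonneg

section MassNormalization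

variable {ι κ : Type*} [Fintype ι] [Fintype κ]

theorem isCompact_uncurry_preimage_stdSimplex :
    IsCompact (Function.uncurry ⁻¹' stdSimplex ℝ (ι × κ) : Set (ι → κ → ℝ)) :=
  (Homeomorph.piCurry.symm.isCompact_preimage).2 (isCompact_stdSimplex ℝ _)

theorem abs_homogenize_vecMul_sub_le (f : (κ → ℝ) → ℝ) {α β : ι → ℝ} {η : ℝ}
    (h : ∀ U : ι → κ → ℝ, Function.uncurry U ∈ stdSimplex ℝ (ι × κ) →
      |homogenize f (α ᵥ* U) - homogenize f (β ᵥ* U)| ≤ η)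
    {V : Matrix ι κ ℝ} (hV : ∀ i j, 0 ≤ V i j) :
    |homogenize f (α ᵥ* V) - homogenize f (β ᵥ* V)| ≤ (∑ i, ∑ j, V i j) * η := by
  have hV' : 0 ≤ Function.uncurry V := fun p => hV p.1 p.2
  rw [show ∑ i, ∑ j, V i j = ∑ p, Function.uncurry V p from
    (Fintype.sum_prod_type (Function.uncurry V)).symm]
  set c := ∑ p, Function.uncurry V p
  rcases (Fintype.sum_nonneg hV').eq_or_lt with hc | hc
  · have hV0 : V = 0 := by
      ext i j
      exact congrFun ((Fintype.sum_eq_zero_iff_of_nonneg hV').1 hc.symm) (i, j)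
    rw [show c = 0 from hc.symm, hV0]
    simp
  have hscale (γ : ι → ℝ) : homogenize f (γ ᵥ* V) = c * homogenize f (γ ᵥ* (c⁻¹ • V)) := by
    rw [Matrix.vecMul_smul, homogenize_smul, mul_inv_cancel_left₀ hc.ne']
  rw [hscale α, hscale β, ← mul_sub, abs_mul, abs_of_pos hc]
  exact mul_le_mul_of_nonneg_left (h _ (inv_sum_smul_mem_stdSimplex hV' hc)) hc.le

end MassNormalization

section AlphaOp

variable {s : ℕ} {Y : Type*} [Fintype Y] {M : Y → Matrix (Fin s) (Fin s) ℝ}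

theorem homogenize_alphaOp (g : (Fin s → ℝ) → ℝ) {β : Fin s → ℝ} (hβ : 0 ≤ β) :
    homogenize (alphaOp M g) β = ∑ y, homogenize g (β ᵥ* M y) := by
  rcases (Fintype.sum_nonneg hβ).eq_or_lt with h | h
  · simp [(Fintype.sum_eq_zero_iff_of_nonneg hβ).1 h.symm]
  rw [homogenize, alphaOp, Finset.mul_sum]
  refine Finset.sum_congr rfl fun y _ => ?_
  -- the `y`-summand of `alphaOp M g α` is `homogenize g (α ᵥ* M y)` by definition
  change _ * homogenize g _ = _
  rw [Matrix.smul_vecMul, homogenize_smul, mul_inv_cancel_left₀ h.ne']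

theorem homogenize_iterate_alphaOp (hM : ∀ y i j, 0 ≤ M y i j) (f : (Fin s → ℝ) → ℝ) (n : ℕ)
    {β : Fin s → ℝ} (hβ : 0 ≤ β) :
    homogenize ((alphaOp M)^[n] f) β = ∑ w : Fin n → Y, homogenize f (β ᵥ* wordProd M w) := by
  induction n generalizing β with
  | zero => simp
  | succ n ih =>
    rw [Function.iterate_succ_apply', homogenize_alphaOp _ hβ, Fintype.sum_fin_succ_pi]
    refine Finset.sum_congr rfl fun y _ => ?_
    simp [ih (Matrix.vecMul_nonneg hβ (hM y)), Matrix.vecMul_vecMul]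

theorem iterate_alphaOp_eq_sum (hM : ∀ y i j, 0 ≤ M y i j) (f : (Fin s → ℝ) → ℝ) (n : ℕ)
    {α : Fin s → ℝ} (hα : α ∈ stdSimplex ℝ (Fin s)) :
    (alphaOp M)^[n] f α = ∑ w : Fin n → Y, homogenize f (α ᵥ* wordProd M w) := by
  rw [← homogenize_iterate_alphaOp hM f n hα.1, homogenize_of_mem_stdSimplex _ hα]

theorem sum_mass_wordProd (hM : ∀ y i j, 0 ≤ M y i j) (hP : ∀ i, ∑ j, (∑ y, M y) i j = 1)
    (n : ℕ) : ∑ w : Fin n → Y, ∑ i, ∑ j, wordProd M w i j = s := by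
  have hstoch : ∑ y, M y ∈ rowStochastic ℝ (Fin s) :=
    mem_rowStochastic_iff_sum.2
      ⟨fun i j => by simpa [Matrix.sum_apply] using Finset.sum_nonneg fun y _ => hM y i j, hP⟩
  have hrow := sum_row_of_mem_rowStochastic (pow_mem hstoch n)
  simp only [Finset.sum_comm (γ := Fin n → Y), ← Matrix.sum_apply, sum_wordProd, hrow]
  simp

theorem abs_iterate_alphaOp_sub_le (hM : ∀ y i j, 0 ≤ M y i j)
    (hP : ∀ i, ∑ j, (∑ y, M y) i j = 1) (f : (Fin s → ℝ) → ℝ) {α β : Fin s → ℝ}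
    (hα : α ∈ stdSimplex ℝ (Fin s)) (hβ : β ∈ stdSimplex ℝ (Fin s)) {η : ℝ}
    (h : ∀ U : Fin s → Fin s → ℝ, Function.uncurry U ∈ stdSimplex ℝ (Fin s × Fin s) →
      |homogenize f (α ᵥ* U) - homogenize f (β ᵥ* U)| ≤ η) (n : ℕ) :
    |(alphaOp M)^[n] f α - (alphaOp M)^[n] f β| ≤ s * η := by
  rw [iterate_alphaOp_eq_sum hM f n hα, iterate_alphaOp_eq_sum hM f n hβ,
    ← Finset.sum_sub_distrib, ← sum_mass_wordProd hM hP n, Finset.sum_mul]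
  exact (Finset.abs_sum_le_sum_abs _ _).trans <| Finset.sum_le_sum fun w _ =>
    abs_homogenize_vecMul_sub_le f h (wordProd_nonneg hM w)

theorem uniformEquicontinuousOn_iterate_alphaOp (hM : ∀ y i j, 0 ≤ M y i j)
    (hP : ∀ i, ∑ j, (∑ y, M y) i j = 1) {f : (Fin s → ℝ) → ℝ}
    (hf : ContinuousOn f (stdSimplex ℝ (Fin s))) :
    UniformEquicontinuousOn (fun n => (alphaOp M)^[n] f) (stdSimplex ℝ (Fin s)) := by
  let W : Set (Fin s → Fin s → ℝ) := Function.uncurry ⁻¹' stdSimplex ℝ (Fin s × Fin s)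
  have hG : UniformContinuousOn (fun p : (Fin s → ℝ) × (Fin s → Fin s → ℝ) =>
      homogenize f (p.1 ᵥ* p.2)) (stdSimplex ℝ (Fin s) ×ˢ W) :=
    ((isCompact_stdSimplex ℝ _).prod
      isCompact_uncurry_preimage_stdSimplex).uniformContinuousOn_of_continuous <|
        (continuousOn_homogenize f hf).comp
          (continuous_fst.matrix_vecMul continuous_snd).continuousOn
          fun p hp => Matrix.vecMul_nonneg hp.1.1 fun i j => hp.2.1 (i, j)
  rw [Metric.uniformEquicontinuousOn_iff]
  intro ε hε
  obtain ⟨δ, hδ, hGδ⟩ := Metric.uniformContinuousOn_iff.1 hG (ε / (s + 1)) (by positivity)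
  refine ⟨δ, hδ, fun α hα β hβ hαβ n => ?_⟩
  have hclose (U) (hU : U ∈ W) : |homogenize f (α ᵥ* U) - homogenize f (β ᵥ* U)| ≤ ε / (s + 1) :=
    (hGδ (α, U) ⟨hα, hU⟩ (β, U) ⟨hβ, hU⟩ (by simpa [Prod.dist_eq] using hαβ)).le
  calc dist ((alphaOp M)^[n] f α) ((alphaOp M)^[n] f β)
      ≤ s * (ε / (s + 1)) := abs_iterate_alphaOp_sub_le hM hP f hα hβ hclose n
    _ < ε := by
      rw [mul_div_assoc', div_lt_iff₀ (by positivity)]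
      linarith

end AlphaOp

/-- Every α-chain is an e-chain: for any finite family of nonnegative matrices `M(y)`
summing to a stochastic matrix and any `f` continuous on the simplex `Δ`, the family
`{Tⁿ f : n ≥ 1}` is equicontinuous on `Δ`. -/
theorem stmt7 (s : ℕ) (Y : Type*) [Fintype Y]
    (M : Y → Matrix (Fin s) (Fin s) ℝ)
    (hpos : ∀ y i j, 0 ≤ M y i j)
    (hstoch : ∀ i, ∑ j, (∑ y, M y) i j = 1)
    (f : (Fin s → ℝ) → ℝ) (hf : ContinuousOn f (stdSimplex ℝ (Fin s))) :
    EquicontinuousOn (fun n : ℕ => (alphaOp M)^[n + 1] f)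
      (stdSimplex ℝ (Fin s)) :=
  ((uniformEquicontinuousOn_iterate_alphaOp hpos hstoch hf).comp (· + 1)).equicontinuousOn
end

section
/- Let M = Σ_y M(y) be irreducible and suppose some rank-one nonnegative matrix R = u v (u a nonnegative nonzero column vector, v a probability row vector) is a limit of positively rescaled words M(y_1)⋯M(y_n). Then for every α ∈ Δ there exists a word z with α M(z) u > 0; consequently α M(z) R is a positive scalar multiple of v. -/
/-!
Irreducibility of `∑ y, M y` gives, for any `i` with `α i > 0` and `j` with `u j > 0`, a power with
positive `(i, j)` entry; expanding that power as a sum of word products, some single word `z` has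
`M(z) i j > 0`. By nonnegativity `α M(z) u ≥ α i · M(z) i j · u j > 0`, and
`α M(z) (u v) = (α M(z) u) • v`.
-/

open Matrix Filter

theorem exists_pos_of_nonneg_of_ne_zero {n 𝕜 : Type*} [Zero 𝕜] [PartialOrder 𝕜] {v : n → 𝕜}
    (hv : 0 ≤ v) (hv₀ : v ≠ 0) : ∃ i, 0 < v i :=
  (Pi.lt_def.1 (hv.lt_of_ne hv₀.symm)).2

theorem ne_zero_of_mem_stdSimplex {n 𝕜 : Type*} [Fintype n] [Semiring 𝕜] [PartialOrder 𝕜]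
    [Nontrivial 𝕜] {v : n → 𝕜} (hv : v ∈ stdSimplex 𝕜 n) : v ≠ 0 := by
  rintro rfl
  simpa using hv.2

theorem Matrix.exists_apply_pos_of_sum_apply_pos {ι n 𝕜 : Type*} [Fintype ι] [AddCommMonoid 𝕜]
    [LinearOrder 𝕜] [IsOrderedCancelAddMonoid 𝕜] {M : ι → Matrix n n 𝕜} {i j : n}
    (h : 0 < (∑ y, M y) i j) : ∃ y, 0 < M y i j := by
  rw [Matrix.sum_apply] at h
  simpa using Finset.exists_lt_of_sum_lt (s := Finset.univ) (f := fun _ => 0) (by simpa using h)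

section LinearOrderedSemiring

variable {ι n 𝕜 : Type*} [Fintype n] [Semiring 𝕜] [LinearOrder 𝕜] [IsStrictOrderedRing 𝕜]

theorem Matrix.dotProduct_pos_iff_of_nonneg {v w : n → 𝕜} (hv : 0 ≤ v) (hw : 0 ≤ w) :
    0 < v ⬝ᵥ w ↔ ∃ i, 0 < v i ∧ 0 < w i := by
  rw [dotProduct, Finset.sum_pos_iff_of_nonneg fun i _ => mul_nonneg (hv i) (hw i)]
  simp only [Finset.mem_univ, true_and]
  exact exists_congr fun i =>
    ⟨fun h => ⟨pos_of_mul_pos_left h (hw i), pos_of_mul_pos_right h (hv i)⟩,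
      fun h => mul_pos h.1 h.2⟩

theorem Matrix.mul_apply_pos_iff_of_nonneg {A B : Matrix n n 𝕜} (hA : ∀ i j, 0 ≤ A i j)
    (hB : ∀ i j, 0 ≤ B i j) (i j : n) :
    0 < (A * B) i j ↔ ∃ l, 0 < A i l ∧ 0 < B l j := by
  rw [mul_apply']
  exact dotProduct_pos_iff_of_nonneg (hA i) (hB · j)

theorem Matrix.list_prod_apply_nonneg [DecidableEq n] {l : List (Matrix n n 𝕜)}
    (hl : ∀ A ∈ l, ∀ i j, 0 ≤ A i j) (i j : n) : 0 ≤ l.prod i j := by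
  induction l generalizing i with
  | nil => rw [List.prod_nil, one_apply]; split_ifs <;> simp
  | cons A l ih =>
    rw [List.prod_cons, mul_apply']
    exact dotProduct_nonneg_of_nonneg (hl A (by simp) i)
      fun l' => ih (fun B hB => hl B (by simp [hB])) l'

variable [DecidableEq n]

theorem Matrix.exists_list_prod_apply_pos_of_sum_pow_apply_pos [Fintype ι]
    {M : ι → Matrix n n 𝕜} (hM : ∀ y i j, 0 ≤ M y i j) {k : ℕ} {i j : n}
    (h : 0 < ((∑ y, M y) ^ k) i j) : ∃ z : List ι, 0 < (z.map M).prod i j := by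
  have hsum : ∀ i j, 0 ≤ (∑ y, M y) i j := fun i j => by
    rw [Matrix.sum_apply]
    exact Finset.sum_nonneg fun y _ => hM y i j
  have hword : ∀ (z : List ι) i j, 0 ≤ (z.map M).prod i j := fun z =>
    list_prod_apply_nonneg (by simpa using fun y _ => hM y)
  induction k generalizing j with
  | zero => exact ⟨[], by simpa using h⟩
  | succ k ih =>
    rw [pow_succ, mul_apply_pos_iff_of_nonneg (pow_apply_nonneg hsum k) hsum] at h
    obtain ⟨l, hkl, hlj⟩ := h
    obtain ⟨z, hz⟩ := ih hkl
    obtain ⟨y, hy⟩ := exists_apply_pos_of_sum_apply_pos hlj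
    refine ⟨z ++ [y], ?_⟩
    rw [List.map_append, List.prod_append, List.map_singleton, List.prod_singleton,
      mul_apply_pos_iff_of_nonneg (hword z) (hM y)]
    exact ⟨l, hz, hy⟩

end LinearOrderedSemiring

theorem Matrix.vecMul_mul_vecMulVec {m n α : Type*} [Fintype m] [Fintype n] [CommSemiring α]
    (a : m → α) (P : Matrix m n α) (u : n → α) (v : n → α) :
    a ᵥ* (P * vecMulVec u v) = ((a ᵥ* P) ⬝ᵥ u) • v := by
  rw [← vecMul_vecMul, vecMul_vecMulVec]

theorem stmt8_general (s : ℕ) (Y : Type*) [Fintype Y]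
    (M : Y → Matrix (Fin s) (Fin s) ℝ)
    (hpos : ∀ y i j, 0 ≤ M y i j)
    (Mtot : Matrix (Fin s) (Fin s) ℝ) (hMtot : Mtot = ∑ y, M y)
    (hirr : ∀ i j, ∃ k, 0 < k ∧ 0 < (Mtot ^ k) i j)
    (u : Fin s → ℝ) (hu : ∀ i, 0 ≤ u i) (hune : u ≠ 0)
    (v : Fin s → ℝ)
    (R : Matrix (Fin s) (Fin s) ℝ) (hR : R = Matrix.of fun i j => u i * v j) :
    ∀ α ∈ stdSimplex ℝ (Fin s), ∃ z : List Y,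
      0 < (α ᵥ* ((z.map M).prod)) ⬝ᵥ u ∧
      ∃ t : ℝ, 0 < t ∧ α ᵥ* ((z.map M).prod * R) = t • v := by
  intro α hα
  subst hMtot hR
  obtain ⟨i, hi⟩ := exists_pos_of_nonneg_of_ne_zero hα.1 (ne_zero_of_mem_stdSimplex hα)
  obtain ⟨j, hj⟩ := exists_pos_of_nonneg_of_ne_zero hu hune
  obtain ⟨k, -, hk⟩ := hirr i j
  obtain ⟨z, hz⟩ := exists_list_prod_apply_pos_of_sum_pow_apply_pos hpos hk
  have hP : ∀ i j, 0 ≤ (z.map M).prod i j :=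
    list_prod_apply_nonneg (by simpa using fun y _ => hpos y)
  have hαP : 0 < (α ᵥ* (z.map M).prod) j :=
    (dotProduct_pos_iff_of_nonneg hα.1 (hP · j)).2 ⟨i, hi, hz⟩
  have hαPu : 0 < (α ᵥ* (z.map M).prod) ⬝ᵥ u :=
    (dotProduct_pos_iff_of_nonneg (fun j => dotProduct_nonneg_of_nonneg hα.1 (hP · j)) hu).2
      ⟨j, hαP, hj⟩
  exact ⟨z, hαPu, _, hαPu, vecMul_mul_vecMulVec α _ u v⟩

/-- If `M` is irreducible and `R = u v` (with `u ≥ 0` nonzero, `v` a probability vector) is a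
limit of positively rescaled words `M(y₁)⋯M(yₙ)`, then for every `α ∈ Δ` there is a word `z`
with `α M(z) u > 0`; consequently `α M(z) R` is a positive multiple of `v`. -/
theorem stmt8 (s : ℕ) (Y : Type*) [Fintype Y]
    (M : Y → Matrix (Fin s) (Fin s) ℝ)
    (hpos : ∀ y i j, 0 ≤ M y i j)
    (Mtot : Matrix (Fin s) (Fin s) ℝ) (hMtot : Mtot = ∑ y, M y)
    (hstoch : ∀ i, ∑ j, Mtot i j = 1)
    (hirr : ∀ i j, ∃ k, 0 < k ∧ 0 < (Mtot ^ k) i j)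
    (u : Fin s → ℝ) (hu : ∀ i, 0 ≤ u i) (hune : u ≠ 0)
    (v : Fin s → ℝ) (hv : v ∈ stdSimplex ℝ (Fin s))
    (R : Matrix (Fin s) (Fin s) ℝ) (hR : R = Matrix.of fun i j => u i * v j)
    (hlim : ∃ (c : ℕ → ℝ) (w : ℕ → List Y),
      (∀ n, 0 < c n) ∧ (∀ n, w n ≠ []) ∧
      Tendsto (fun n => c n • ((w n).map M).prod) atTop (nhds R)) :
    ∀ α ∈ stdSimplex ℝ (Fin s), ∃ z : List Y,
      0 < (α ᵥ* ((z.map M).prod)) ⬝ᵥ u ∧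
      ∃ t : ℝ, 0 < t ∧ α ᵥ* ((z.map M).prod * R) = t • v :=
  stmt8_general s Y M hpos Mtot hMtot hirr u hu hune v R hR
end

section
/- Let ‖·‖ denote the ℓ¹ norm on row vectors in ℝ^s and the induced operator norm on matrices acting on the right. If S/ (π S e) = w v + δ T where w is a column vector with π w = 1, v a probability row vector, ‖T‖ ≤ 1, 0 ≤ δ < 1/4, and α ∈ Δ satisfies α S e / (π S e) > 2√δ, then the column-sum scalar satisfies α w > √δ, and αS/(αSe) = (v + √δ β)/(1 + √δ β e) for some vector β with ‖β‖ ≤ 1, namely β = √δ α T / (α w). -/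
/-! Multiplying the decomposition by `α` gives `α S = (π S e) ((α w) v + δ α T)` with
`‖α T‖ ≤ 1`, so the mass `α S e / (π S e)` is at most `α w + δ`; the hypothesis then forces
`α w > 2√δ - δ ≥ √δ`. Factoring out `α w` writes `α S` as a multiple of `v + √δ β`, and
normalizing to unit mass ignores that multiple. -/

open Matrix Finset

section RowVectors

variable {ι : Type*} [Fintype ι]

lemma sum_abs_eq_one_of_mem_stdSimplex {α : ι → ℝ} (hα : α ∈ stdSimplex ℝ ι) :
    ∑ i, |α i| = 1 := by
  rw [← hα.2]
  exact sum_congr rfl fun i _ => abs_of_nonneg (hα.1 i)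

lemma sum_abs_smul (a : ℝ) (x : ι → ℝ) : ∑ i, |(a • x) i| = |a| * ∑ i, |x i| := by
  simp only [Pi.smul_apply, smul_eq_mul, abs_mul, mul_sum]

lemma inv_sum_smul_smul {a : ℝ} (ha : a ≠ 0) (x : ι → ℝ) :
    (∑ j, (a • x) j)⁻¹ • (a • x) = (∑ j, x j)⁻¹ • x := by
  simp only [Pi.smul_apply, smul_eq_mul, ← mul_sum, smul_smul]
  congr 1
  field_simp

lemma vecMul_eq_of_inv_smul_eq_vecMulVec_add {κ : Type*} {c δ : ℝ} (hc : c ≠ 0)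
    {S T : Matrix ι κ ℝ} {w : ι → ℝ} {v : κ → ℝ} (h : c⁻¹ • S = vecMulVec w v + δ • T) (α : ι → ℝ) :
    α ᵥ* S = c • ((α ⬝ᵥ w) • v + δ • α ᵥ* T) := by
  rw [← vecMul_vecMulVec, ← vecMul_smul, ← vecMul_add, ← h, vecMul_smul, smul_inv_smul₀ hc]

end RowVectors

lemma smul_add_mul_self_smul_eq {ι : Type*} {m : ℝ} (hm : m ≠ 0) (r : ℝ) (v u : ι → ℝ) :
    m • v + (r * r) • u = m • (v + r • ((r / m) • u)) := by
  ext j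
  simp only [Pi.add_apply, Pi.smul_apply, smul_eq_mul]
  field_simp

lemma lt_of_two_mul_lt_add_mul_self_mul {r m t : ℝ} (hr0 : 0 ≤ r) (hr1 : r ≤ 1) (ht : t ≤ 1)
    (h : 2 * r < m + r * r * t) : r < m := by
  nlinarith [mul_le_mul_of_nonneg_left ht (mul_nonneg hr0 hr0),
    mul_le_mul_of_nonneg_left hr1 hr0]

theorem stmt10_general (s : ℕ) (π w v : Fin s → ℝ) (S T : Matrix (Fin s) (Fin s) ℝ)
    (hπS : 0 < ∑ j, (π ᵥ* S) j)
    (hv : v ∈ stdSimplex ℝ (Fin s))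
    (δ : ℝ) (hδ0 : 0 ≤ δ) (hδ : δ < 1 / 4)
    (hT : ∀ β : Fin s → ℝ, ∑ j, |(β ᵥ* T) j| ≤ ∑ i, |β i|)
    (hdecomp : (∑ j, (π ᵥ* S) j)⁻¹ • S = (Matrix.of fun i j => w i * v j) + δ • T)
    (α : Fin s → ℝ) (hα : α ∈ stdSimplex ℝ (Fin s))
    (hbig : 2 * Real.sqrt δ < (∑ j, (α ᵥ* S) j) / (∑ j, (π ᵥ* S) j)) :
    Real.sqrt δ < α ⬝ᵥ w ∧
    (∑ i, |((Real.sqrt δ / (α ⬝ᵥ w)) • (α ᵥ* T)) i| ≤ 1) ∧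
    (∑ j, (α ᵥ* S) j)⁻¹ • (α ᵥ* S) =
      (1 + Real.sqrt δ * ∑ j, ((Real.sqrt δ / (α ⬝ᵥ w)) • (α ᵥ* T)) j)⁻¹ •
        (v + Real.sqrt δ • ((Real.sqrt δ / (α ⬝ᵥ w)) • (α ᵥ* T))) := by
  set c := ∑ j, (π ᵥ* S) j
  set r := Real.sqrt δ
  set m := α ⬝ᵥ w
  set u := α ᵥ* T
  have hr : r * r = δ := Real.mul_self_sqrt hδ0
  have hr0 : 0 ≤ r := Real.sqrt_nonneg δ
  have hr1 : r ≤ 1 := Real.sqrt_le_one.mpr (by linarith)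
  have hu : ∑ j, |u j| ≤ 1 := (hT α).trans_eq (sum_abs_eq_one_of_mem_stdSimplex hα)
  have hαS : α ᵥ* S = c • (m • v + (r * r) • u) :=
    hr ▸ vecMul_eq_of_inv_smul_eq_vecMulVec_add hπS.ne' hdecomp α
  have hmass : (∑ j, (α ᵥ* S) j) / c = m + r * r * ∑ j, u j := by
    simp only [hαS, Pi.smul_apply, Pi.add_apply, smul_eq_mul, ← mul_sum, sum_add_distrib,
      hv.2, mul_one, mul_div_cancel_left₀ _ hπS.ne']
  have hm : r < m := lt_of_two_mul_lt_add_mul_self_mul hr0 hr1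
    ((sum_le_sum fun j _ => le_abs_self (u j)).trans hu) (hmass ▸ hbig)
  have hm0 : 0 < m := hr0.trans_lt hm
  refine ⟨hm, ?_, ?_⟩
  · rw [sum_abs_smul, abs_of_nonneg (div_nonneg hr0 hm0.le)]
    calc r / m * ∑ j, |u j| ≤ r / m := mul_le_of_le_one_right (div_nonneg hr0 hm0.le) hu
      _ ≤ 1 := (div_le_one hm0).mpr hm.le
  · rw [hαS, inv_sum_smul_smul hπS.ne', smul_add_mul_self_smul_eq hm0.ne',
      inv_sum_smul_smul hm0.ne']
    simp only [Pi.add_apply, Pi.smul_apply, smul_eq_mul, sum_add_distrib, ← mul_sum, hv.2]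

/-- The key estimate with ℓ¹ norms: if `S/(π S e) = w v + δ T` with `π w = 1`, `v` a
probability vector, `‖T‖ ≤ 1` in the induced ℓ¹ operator norm (acting on row vectors on
the right), `0 ≤ δ < 1/4`, and `α ∈ Δ` satisfies `α S e/(π S e) > 2√δ`, then `α w > √δ`,
and with `β = √δ α T/(α w)` we have `‖β‖ ≤ 1` and
`α S/(α S e) = (v + √δ β)/(1 + √δ β e)`. -/
theorem stmt10 (s : ℕ) (π w v : Fin s → ℝ) (S T : Matrix (Fin s) (Fin s) ℝ)
    (hπ : π ∈ stdSimplex ℝ (Fin s))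
    (hS : ∀ i j, 0 ≤ S i j)
    (hπS : 0 < ∑ j, (π ᵥ* S) j)
    (hw : π ⬝ᵥ w = 1)
    (hv : v ∈ stdSimplex ℝ (Fin s))
    (δ : ℝ) (hδ0 : 0 ≤ δ) (hδ : δ < 1 / 4)
    (hT : ∀ β : Fin s → ℝ, ∑ j, |(β ᵥ* T) j| ≤ ∑ i, |β i|)
    (hdecomp : (∑ j, (π ᵥ* S) j)⁻¹ • S = (Matrix.of fun i j => w i * v j) + δ • T)
    (α : Fin s → ℝ) (hα : α ∈ stdSimplex ℝ (Fin s))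
    (hbig : 2 * Real.sqrt δ < (∑ j, (α ᵥ* S) j) / (∑ j, (π ᵥ* S) j)) :
    Real.sqrt δ < α ⬝ᵥ w ∧
    (∑ i, |((Real.sqrt δ / (α ⬝ᵥ w)) • (α ᵥ* T)) i| ≤ 1) ∧
    (∑ j, (α ᵥ* S) j)⁻¹ • (α ᵥ* S) =
      (1 + Real.sqrt δ * ∑ j, ((Real.sqrt δ / (α ⬝ᵥ w)) • (α ᵥ* T)) j)⁻¹ •
        (v + Real.sqrt δ • ((Real.sqrt δ / (α ⬝ᵥ w)) • (α ᵥ* T))) :=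
  stmt10_general s π w v S T hπS hv δ hδ0 hδ hT hdecomp α hα hbig
end

section
/- For the HMM with M(0) = (1/2)I₂ and M(1) = (1/2)(antidiagonal permutation matrix), the α-chain on the 1-simplex moves from (u,v) to (u,v) with probability 1/2 and to (v,u) with probability 1/2; hence the function |u − v| is invariant under the chain, and the chain admits multiple invariant probability measures (e.g., the point mass at (1/2,1/2) and, for each 0 < u < 1/2, the measure giving mass 1/2 to each of (u,1−u) and (1−u,u)), even though M = [[1/2,1/2],[1/2,1/2]] is aperiodic. -/
open Matrix MeasureTheory
open scoped Classical

/-- The stepping matrices `M(0) = (1/2)I` and `M(1) = (1/2)·(swap)`. -/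
noncomputable def Mex13 : Fin 2 → Matrix (Fin 2) (Fin 2) ℝ :=
  ![!![(1:ℝ)/2, 0; 0, 1/2], !![0, (1:ℝ)/2; 1/2, 0]]

/-- The transition kernel of the α-chain for this example. -/
noncomputable def Pker13 (α : Fin 2 → ℝ) (A : Set (Fin 2 → ℝ)) : ℝ :=
  ∑ y : Fin 2,
    if ((∑ j, (α ᵥ* Mex13 y) j)⁻¹ • (α ᵥ* Mex13 y)) ∈ A
    then ∑ j, (α ᵥ* Mex13 y) j else 0

/-- A probability measure `λ` on `Δ` is invariant for the α-chain. -/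
def Invariant13 (μ : Measure (Fin 2 → ℝ)) : Prop :=
  ∀ A : Set (Fin 2 → ℝ), MeasurableSet A → ∫ α, Pker13 α A ∂μ = (μ A).toReal

lemma pker_eq (α : Fin 2 → ℝ) (h : α 0 + α 1 = 1) (A : Set (Fin 2 → ℝ)) :
    Pker13 α A = (if α ∈ A then (1:ℝ)/2 else 0) +
      (if (![α 1, α 0]) ∈ A then (1:ℝ)/2 else 0) := by
  have v0 : (α ᵥ* Mex13 0) = ![α 0 / 2, α 1 / 2] := by
    funext i
    fin_cases i <;>
      simp [Mex13, Matrix.vecMul, dotProduct, Fin.sum_univ_two] <;> ring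
  have v1 : (α ᵥ* Mex13 1) = ![α 1 / 2, α 0 / 2] := by
    funext i
    fin_cases i <;>
      simp [Mex13, Matrix.vecMul, dotProduct, Fin.sum_univ_two] <;> ring
  have s0 : (∑ j, (α ᵥ* Mex13 0) j) = 1/2 := by
    rw [v0, Fin.sum_univ_two]; simp; linarith
  have s1 : (∑ j, (α ᵥ* Mex13 1) j) = 1/2 := by
    rw [v1, Fin.sum_univ_two]; simp; linarith
  have n0 : ((1:ℝ)/2)⁻¹ • (α ᵥ* Mex13 0) = α := by
    rw [v0]; funext i; fin_cases i <;> simp <;> ring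
  have n1 : ((1:ℝ)/2)⁻¹ • (α ᵥ* Mex13 1) = ![α 1, α 0] := by
    rw [v1]; funext i; fin_cases i <;> simp <;> ring
  unfold Pker13
  rw [Fin.sum_univ_two, s0, s1, n0, n1]

lemma integrable_dirac' {c : ENNReal} (hc : c ≠ ⊤) (f : (Fin 2 → ℝ) → ℝ)
    (a : Fin 2 → ℝ) : Integrable f (c • Measure.dirac a) := by
  rcases eq_or_ne c 0 with rfl | hc0
  · simp [integrable_zero_measure]
  refine (integrable_smul_measure (μ := Measure.dirac a) hc0 hc).mpr ?_
  · refine (integrable_const (f a)).congr ?_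
    rw [Filter.EventuallyEq, ae_dirac_eq]
    simp

/-- For the HMM with `M(0) = (1/2)I₂` and `M(1) = (1/2)(swap)`: the α-chain keeps `α` with
probability `1/2` and swaps its coordinates with probability `1/2`; `|u − v|` is invariant;
the chain admits multiple invariant probability measures (the point mass at `(1/2,1/2)` and,
for `0 < u < 1/2`, the symmetric two-point measures), although `M` is aperiodic. -/
theorem stmt13 :
    (∀ α ∈ stdSimplex ℝ (Fin 2), ∀ A : Set (Fin 2 → ℝ),
      Pker13 α A = (if α ∈ A then (1:ℝ)/2 else 0) +
        (if (![α 1, α 0]) ∈ A then (1:ℝ)/2 else 0)) ∧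
    (∀ α ∈ stdSimplex ℝ (Fin 2),
      Pker13 α {β | |β 0 - β 1| = |α 0 - α 1|} = 1) ∧
    Invariant13 (Measure.dirac ![(1:ℝ)/2, 1/2]) ∧
    (∀ u : ℝ, 0 < u → u < 1/2 →
      Invariant13 ((1/2 : ENNReal) • Measure.dirac ![u, 1-u] +
        (1/2 : ENNReal) • Measure.dirac ![1-u, u]) ∧
      (((1/2 : ENNReal) • Measure.dirac ![u, 1-u] +
        (1/2 : ENNReal) • Measure.dirac ![1-u, u] : Measure (Fin 2 → ℝ)) ≠
        Measure.dirac ![(1:ℝ)/2, 1/2])) ∧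
    (∃ k : ℕ, ∀ i j, 0 < ((Mex13 0 + Mex13 1) ^ k) i j) := by
  have hmem : ∀ α ∈ stdSimplex ℝ (Fin 2), α 0 + α 1 = 1 := by
    intro α hα
    have := hα.2
    rwa [Fin.sum_univ_two] at this
  have part1 : ∀ α ∈ stdSimplex ℝ (Fin 2), ∀ A : Set (Fin 2 → ℝ),
      Pker13 α A = (if α ∈ A then (1:ℝ)/2 else 0) +
        (if (![α 1, α 0]) ∈ A then (1:ℝ)/2 else 0) := by
    intro α hα A
    exact pker_eq α (hmem α hα) A
  refine ⟨part1, ?_, ?_, ?_, ?_⟩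
  · intro α hα
    rw [pker_eq α (hmem α hα)]
    rw [if_pos (by simp), if_pos (by simp [abs_sub_comm])]
    norm_num
  · intro A hA
    have hc : (![(1:ℝ)/2, 1/2] : Fin 2 → ℝ) 0 + (![(1:ℝ)/2, 1/2] : Fin 2 → ℝ) 1 = 1 := by
      norm_num
    rw [integral_dirac, pker_eq _ hc, Measure.dirac_apply]
    have hswap : (![(![(1:ℝ)/2, 1/2] : Fin 2 → ℝ) 1, (![(1:ℝ)/2, 1/2] : Fin 2 → ℝ) 0]) =
        (![(1:ℝ)/2, 1/2] : Fin 2 → ℝ) := by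
      funext i; fin_cases i <;> norm_num
    rw [hswap]
    by_cases h : (![(1:ℝ)/2, 1/2] : Fin 2 → ℝ) ∈ A
    · rw [if_pos h, Set.indicator_of_mem h]; norm_num
    · rw [if_neg h, Set.indicator_of_notMem h]; norm_num
  · intro u hu hu'
    set a : Fin 2 → ℝ := ![u, 1-u] with ha
    set b : Fin 2 → ℝ := ![1-u, u] with hb
    have hsa : a 0 + a 1 = 1 := by simp [ha]
    have hsb : b 0 + b 1 = 1 := by simp [hb]
    have hswa : (![a 1, a 0]) = b := by funext i; fin_cases i <;> simp [ha, hb]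
    have hswb : (![b 1, b 0]) = a := by funext i; fin_cases i <;> simp [ha, hb]
    constructor
    · intro A hA
      rw [integral_add_measure (integrable_dirac' (by norm_num) _ _)
            (integrable_dirac' (by norm_num) _ _),
          integral_smul_measure, integral_smul_measure, integral_dirac, integral_dirac,
          pker_eq a hsa, pker_eq b hsb, hswa, hswb]
      simp only [Measure.coe_add, Measure.coe_smul, Pi.add_apply, Pi.smul_apply,
        Measure.dirac_apply, smul_eq_mul]
      by_cases h1 : a ∈ A <;> by_cases h2 : b ∈ A <;>
        simp [h1, h2, Set.indicator_apply, ENNReal.toReal_mul,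
          ENNReal.inv_two_add_inv_two] <;> norm_num
    · intro hEq
      have h1 : a ≠ ![(1:ℝ)/2, 1/2] := by
        intro h; have := congrFun h 0; simp [ha] at this; linarith
      have h2 : b ≠ ![(1:ℝ)/2, 1/2] := by
        intro h; have := congrFun h 0; simp [hb] at this; linarith
      have := congrArg (fun μ : Measure (Fin 2 → ℝ) => μ {![(1:ℝ)/2, 1/2]}) hEq
      simp only [Measure.coe_add, Measure.coe_smul, Pi.add_apply, Pi.smul_apply,
        Measure.dirac_apply, smul_eq_mul] at this
      rw [Set.indicator_apply, Set.indicator_apply, Set.indicator_apply] at this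
      simp only [one_div] at h1 h2
      simp [h1, h2] at this
  · refine ⟨1, ?_⟩
    intro i j
    rw [pow_one]
    fin_cases i <;> fin_cases j <;> norm_num [Mex13]
end

section
/- For the HMM with M(0) = [[0,0],[1,0]] and M(1) = [[0,1],[0,0]] (so M = [[0,1],[1,0]] is irreducible but periodic), starting from α₀ = (x, 1−x) with x ∉ {0, 1/2, 1}, the distributions of α_{2n} converge to the measure giving mass x to (1,0) and 1−x to (0,1), while the distributions of α_{2n+1} converge to the measure giving mass x to (0,1) and 1−x to (1,0); these two limits are distinct, so the distribution of α_n does not converge weakly. -/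
open Matrix Filter

/-- The stepping matrices `M(0) = [[0,0],[1,0]]` and `M(1) = [[0,1],[0,0]]`. -/
def Mex14 : Fin 2 → Matrix (Fin 2) (Fin 2) ℝ :=
  ![!![0, 0; 1, 0], !![0, (1:ℝ); 0, 0]]

/-- The product `M(w)` of a word `w`. -/
def wordProd14 {n : ℕ} (w : Fin n → Fin 2) : Matrix (Fin 2) (Fin 2) ℝ :=
  (List.ofFn (fun i => Mex14 (w i))).prod

/-- The integral of a test function `f` against the distribution of `αₙ` started at `α₀`:
`∫ f dμₙ = Σ_{w ∈ 𝒴ⁿ} (α₀ M(w) e) f(α₀ M(w)/(α₀ M(w) e))`. -/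
noncomputable def distInt14 (α₀ : Fin 2 → ℝ) (n : ℕ) (f : (Fin 2 → ℝ) → ℝ) : ℝ :=
  ∑ w : Fin n → Fin 2,
    (∑ j, (α₀ ᵥ* wordProd14 w) j) *
      f ((∑ j, (α₀ ᵥ* wordProd14 w) j)⁻¹ • (α₀ ᵥ* wordProd14 w))

/-!
A vector `(a, b)` is sent by `M(0)` to `b (1,0)` and by `M(1)` to `a (0,1)`, so one step of
the α-chain from a point of the simplex lands on a vertex, after which it alternates
deterministically between the two vertices. Hence the distribution of `αₙ` (`n ≥ 1`) is
exactly `(1−x) δ_{(1,0)} + x δ_{(0,1)}` for odd `n` and `x δ_{(1,0)} + (1−x) δ_{(0,1)}` for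
even `n`; these differ as soon as `x ≠ 1/2`.
-/

lemma wordProd14_cons {n : ℕ} (a : Fin 2) (w : Fin n → Fin 2) :
    wordProd14 (Fin.cons a w) = Mex14 a * wordProd14 w := by
  simp [wordProd14, List.ofFn_succ]

lemma distInt14_succ (α : Fin 2 → ℝ) (n : ℕ) (f : (Fin 2 → ℝ) → ℝ) :
    distInt14 α (n + 1) f = ∑ a : Fin 2, distInt14 (α ᵥ* Mex14 a) n f := by
  unfold distInt14
  rw [← (Fin.consEquiv fun _ => Fin 2).sum_comp, Fintype.sum_prod_type]
  simp only [Fin.consEquiv, Equiv.coe_fn_mk, wordProd14_cons, ← vecMul_vecMul]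

lemma distInt14_smul (c : ℝ) (α : Fin 2 → ℝ) (n : ℕ) (f : (Fin 2 → ℝ) → ℝ) :
    distInt14 (c • α) n f = c * distInt14 α n f := by
  rcases eq_or_ne c 0 with rfl | hc
  · simp [distInt14]
  unfold distInt14
  rw [Finset.mul_sum]
  refine Finset.sum_congr rfl fun w _ => ?_
  have hsum : ∑ j, (c • (α ᵥ* wordProd14 w)) j = c * ∑ j, (α ᵥ* wordProd14 w) j :=
    (Finset.mul_sum _ _ _).symm
  rw [smul_vecMul, hsum, smul_smul, _root_.mul_inv_rev, inv_mul_cancel_right₀ hc, mul_assoc]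

lemma distInt14_zero_of_sum_eq_one {α : Fin 2 → ℝ} (hα : ∑ j, α j = 1)
    (f : (Fin 2 → ℝ) → ℝ) : distInt14 α 0 f = f α := by
  simp [distInt14, wordProd14, hα]

lemma vecMul_Mex14_zero (a b : ℝ) : ![a, b] ᵥ* Mex14 0 = b • ![1, 0] := by
  ext j; fin_cases j <;> simp [Mex14, vecMul, dotProduct]

lemma vecMul_Mex14_one (a b : ℝ) : ![a, b] ᵥ* Mex14 1 = a • ![0, 1] := by
  ext j; fin_cases j <;> simp [Mex14, vecMul, dotProduct]

lemma distInt14_pair_succ (a b : ℝ) (n : ℕ) (f : (Fin 2 → ℝ) → ℝ) :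
    distInt14 ![a, b] (n + 1) f = b * distInt14 ![1, 0] n f + a * distInt14 ![0, 1] n f := by
  rw [distInt14_succ, Fin.sum_univ_two, vecMul_Mex14_zero, vecMul_Mex14_one,
    distInt14_smul, distInt14_smul]

lemma distInt14_fst_succ (n : ℕ) (f : (Fin 2 → ℝ) → ℝ) :
    distInt14 ![1, 0] (n + 1) f = distInt14 ![0, 1] n f := by
  simp [distInt14_pair_succ]

lemma distInt14_snd_succ (n : ℕ) (f : (Fin 2 → ℝ) → ℝ) :
    distInt14 ![0, 1] (n + 1) f = distInt14 ![1, 0] n f := by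
  simp [distInt14_pair_succ]

lemma distInt14_fst_two_mul (n : ℕ) (f : (Fin 2 → ℝ) → ℝ) :
    distInt14 ![1, 0] (2 * n) f = f ![1, 0] := by
  induction n with
  | zero => exact distInt14_zero_of_sum_eq_one (by simp) f
  | succ n ih => rwa [Nat.mul_succ, distInt14_fst_succ, distInt14_snd_succ]

lemma distInt14_snd_two_mul (n : ℕ) (f : (Fin 2 → ℝ) → ℝ) :
    distInt14 ![0, 1] (2 * n) f = f ![0, 1] := by
  induction n with
  | zero => exact distInt14_zero_of_sum_eq_one (by simp) f
  | succ n ih => rwa [Nat.mul_succ, distInt14_snd_succ, distInt14_fst_succ]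

lemma distInt14_pair_two_mul_add_one (a b : ℝ) (n : ℕ) (f : (Fin 2 → ℝ) → ℝ) :
    distInt14 ![a, b] (2 * n + 1) f = a * f ![0, 1] + b * f ![1, 0] := by
  rw [distInt14_pair_succ, distInt14_fst_two_mul, distInt14_snd_two_mul, add_comm]

lemma distInt14_pair_two_mul_add_two (a b : ℝ) (n : ℕ) (f : (Fin 2 → ℝ) → ℝ) :
    distInt14 ![a, b] (2 * n + 2) f = a * f ![1, 0] + b * f ![0, 1] := by
  rw [distInt14_pair_succ, distInt14_fst_succ, distInt14_snd_succ, distInt14_fst_two_mul,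
    distInt14_snd_two_mul, add_comm]

lemma tendsto_nhds_unique_of_even_odd {u : ℕ → ℝ} {L a b : ℝ} (hu : Tendsto u atTop (nhds L))
    (ha : Tendsto (fun n => u (2 * n)) atTop (nhds a))
    (hb : Tendsto (fun n => u (2 * n + 1)) atTop (nhds b)) : a = b := by
  have h2 : StrictMono fun n : ℕ => 2 * n := fun m n h => by dsimp only; omega
  have h21 : StrictMono fun n : ℕ => 2 * n + 1 := fun m n h => by dsimp only; omega
  exact (tendsto_nhds_unique (hu.comp h2.tendsto_atTop) ha).symm.trans
    (tendsto_nhds_unique (hu.comp h21.tendsto_atTop) hb)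

theorem stmt14_general (x : ℝ) (hxh : x ≠ 1/2) :
    (∀ f : (Fin 2 → ℝ) → ℝ, ContinuousOn f (stdSimplex ℝ (Fin 2)) →
      Tendsto (fun n => distInt14 ![x, 1-x] (2*n) f) atTop
        (nhds (x * f ![1, 0] + (1-x) * f ![0, 1])) ∧
      Tendsto (fun n => distInt14 ![x, 1-x] (2*n+1) f) atTop
        (nhds (x * f ![0, 1] + (1-x) * f ![1, 0]))) ∧
    (∃ f : (Fin 2 → ℝ) → ℝ, ContinuousOn f (stdSimplex ℝ (Fin 2)) ∧
      x * f ![1, 0] + (1-x) * f ![0, 1] ≠ x * f ![0, 1] + (1-x) * f ![1, 0]) ∧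
    ¬ (∀ f : (Fin 2 → ℝ) → ℝ, ContinuousOn f (stdSimplex ℝ (Fin 2)) →
        ∃ L : ℝ, Tendsto (fun n => distInt14 ![x, 1-x] n f) atTop (nhds L)) := by
  have limits (f : (Fin 2 → ℝ) → ℝ) :
      Tendsto (fun n => distInt14 ![x, 1-x] (2*n) f) atTop
        (nhds (x * f ![1, 0] + (1-x) * f ![0, 1])) ∧
      Tendsto (fun n => distInt14 ![x, 1-x] (2*n+1) f) atTop
        (nhds (x * f ![0, 1] + (1-x) * f ![1, 0])) := by
    refine ⟨(tendsto_add_atTop_iff_nat 1).mp ?_, ?_⟩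
    · simp [Nat.mul_succ, distInt14_pair_two_mul_add_two]
    · simp [distInt14_pair_two_mul_add_one]
  have limits_ne : x * (1 : ℝ) + (1-x) * 0 ≠ x * 0 + (1-x) * 1 := fun h => hxh (by linarith)
  refine ⟨fun f _ => limits f, ⟨fun v => v 0, (continuous_apply 0).continuousOn, by simpa using limits_ne⟩, ?_⟩
  intro h
  obtain ⟨L, hL⟩ := h (fun v => v 0) (continuous_apply 0).continuousOn
  exact limits_ne <| by
    simpa using tendsto_nhds_unique_of_even_odd hL (limits _).1 (limits _).2

/-- For this HMM (`M` irreducible but periodic), starting from `α₀ = (x, 1−x)` with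
`x ∉ {0, 1/2, 1}`, the distributions of `α_{2n}` converge weakly to `x δ_{(1,0)} +
(1−x) δ_{(0,1)}`, those of `α_{2n+1}` converge weakly to `x δ_{(0,1)} + (1−x) δ_{(1,0)}`,
these limits are distinct, and the distribution of `αₙ` does not converge weakly. -/
theorem stmt14 (x : ℝ) (hx0 : 0 < x) (hx1 : x < 1) (hxh : x ≠ 1/2) :
    (∀ f : (Fin 2 → ℝ) → ℝ, ContinuousOn f (stdSimplex ℝ (Fin 2)) →
      Tendsto (fun n => distInt14 ![x, 1-x] (2*n) f) atTop
        (nhds (x * f ![1, 0] + (1-x) * f ![0, 1])) ∧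
      Tendsto (fun n => distInt14 ![x, 1-x] (2*n+1) f) atTop
        (nhds (x * f ![0, 1] + (1-x) * f ![1, 0]))) ∧
    (∃ f : (Fin 2 → ℝ) → ℝ, ContinuousOn f (stdSimplex ℝ (Fin 2)) ∧
      x * f ![1, 0] + (1-x) * f ![0, 1] ≠ x * f ![0, 1] + (1-x) * f ![1, 0]) ∧
    ¬ (∀ f : (Fin 2 → ℝ) → ℝ, ContinuousOn f (stdSimplex ℝ (Fin 2)) →
        ∃ L : ℝ, Tendsto (fun n => distInt14 ![x, 1-x] n f) atTop (nhds L)) :=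
  stmt14_general x hxh
end
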